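/- arXiv:1108.4382 — 2 statements merged into one kernel-verified Lean document; each statement's English description precedes it below -/
import Mathlib

section
/- For any finite nonempty sets A, B of real numbers, E_{1.5}(A)² · |B|² ≤ (∑_s E(A_s, B)) · E(A, A + B), where the sum is over s ∈ A − A. -/
/-!
Write `δ(s) = |A_s|`, so that `E_{1.5}(A) |B| = ∑_s δ(s)^{1/2} · |A_s| |B|`. Cauchy–Schwarz on the
representation function of `A_s + B` gives `(|A_s| |B|)² ≤ |A_s + B| · E(A_s, B)`, and a second
Cauchy–Schwarz over `s` bounds `(E_{1.5}(A) |B|)²` by `(∑_s |A_s| |A_s + B|) · ∑_s E(A_s, B)`.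
Finally `(s, a, u) ↦ (a, a - s, u - s, u)` embeds the triples with `a ∈ A_s`, `u ∈ A_s + B` into
the additive quadruples of `(A, A + B)`, so `∑_s |A_s| |A_s + B| ≤ E(A, A + B)`.
-/

open Finset Pointwise

noncomputable def shiftSet (A : Finset ℝ) (s : ℝ) : Finset ℝ := A.image (· + s)

noncomputable def Asub (A : Finset ℝ) (s : ℝ) : Finset ℝ := A ∩ shiftSet A s

noncomputable def dXY (X Y : Finset ℝ) (s : ℝ) : ℕ :=
  ((X ×ˢ Y).filter (fun p => p.1 - p.2 = s)).card

/-- `E(X,Y) = ∑_s δ_{X,Y}(s)^2`. -/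
noncomputable def energyXY (X Y : Finset ℝ) : ℝ :=
  ∑ s ∈ X - Y, (dXY X Y s : ℝ) ^ 2

/-- `E_{1.5}(X) = ∑_s δ_X(s)^{3/2}`. -/
noncomputable def energy15 (X : Finset ℝ) : ℝ :=
  ∑ s ∈ X - X, (dXY X X s : ℝ) ^ ((3 : ℝ) / 2)

open scoped Combinatorics.Additive

namespace Finset

lemma sum_sq_card_fiber_eq_card_filter {ι κ : Type*} [DecidableEq κ] (s : Finset ι)
    (t : Finset κ) (f : ι → κ) (hf : ∀ i ∈ s, f i ∈ t) :
    ∑ j ∈ t, #{i ∈ s | f i = j} ^ 2 = #{p ∈ s ×ˢ s | f p.1 = f p.2} := by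
  rw [card_eq_sum_card_fiberwise (f := fun p => f p.1) (t := t)
    fun p hp => hf _ (mem_product.1 (mem_filter.1 hp).1).1]
  refine sum_congr rfl fun j _ => ?_
  rw [sq, ← card_product]
  congr 1
  ext ⟨a, b⟩
  simp only [mem_filter, mem_product]
  constructor
  · rintro ⟨⟨ha, rfl⟩, hb, hba⟩
    exact ⟨⟨⟨ha, hb⟩, hba.symm⟩, rfl⟩
  · rintro ⟨⟨⟨ha, hb⟩, hab⟩, rfl⟩
    exact ⟨⟨ha, rfl⟩, hb, hab.symm⟩

end Finset

lemma energyXY_eq_addEnergy (X Y : Finset ℝ) : energyXY X Y = E[X, Y] := by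
  have hdiff : ∀ p ∈ X ×ˢ Y, p.1 - p.2 ∈ X - Y := fun p hp =>
    sub_mem_sub (mem_product.1 hp).1 (mem_product.1 hp).2
  rw [energyXY, addEnergy]
  unfold dXY
  norm_cast
  rw [sum_sq_card_fiber_eq_card_filter _ _ _ hdiff]
  refine card_nbij' (fun q => ((q.1.1, q.2.1), (q.2.2, q.1.2)))
    (fun q => ((q.1.1, q.2.2), (q.1.2, q.2.1))) ?_ ?_ (fun _ _ => rfl) (fun _ _ => rfl)
  · rintro ⟨⟨a, b⟩, c, d⟩ hq
    simp only [mem_coe, mem_filter, mem_product] at hq ⊢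
    obtain ⟨⟨⟨ha, hb⟩, hc, hd⟩, h⟩ := hq
    exact ⟨⟨⟨ha, hc⟩, hd, hb⟩, by linarith⟩
  · rintro ⟨⟨a, c⟩, d, b⟩ hq
    simp only [mem_coe, mem_filter, mem_product] at hq ⊢
    obtain ⟨⟨⟨ha, hc⟩, hd, hb⟩, h⟩ := hq
    exact ⟨⟨⟨ha, hb⟩, hc, hd⟩, by linarith⟩

lemma energyXY_nonneg (X Y : Finset ℝ) : 0 ≤ energyXY X Y := by
  rw [energyXY_eq_addEnergy]
  positivity

lemma mem_Asub {A : Finset ℝ} {s a : ℝ} : a ∈ Asub A s ↔ a ∈ A ∧ a - s ∈ A := by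
  simp [Asub, shiftSet, sub_eq_add_neg]

lemma dXY_self_eq_card_Asub (A : Finset ℝ) (s : ℝ) : dXY A A s = #(Asub A s) := by
  refine card_nbij' Prod.fst (fun a => (a, a - s)) ?_ ?_ ?_ (fun _ _ => rfl)
  · rintro ⟨a, b⟩ h
    simp only [mem_coe, mem_filter, mem_product] at h
    obtain ⟨⟨ha, hb⟩, rfl⟩ := h
    simpa [mem_Asub] using ⟨ha, hb⟩
  · intro a ha
    simpa [mem_Asub] using ha
  · rintro ⟨a, b⟩ h
    simp only [mem_coe, mem_filter, mem_product] at h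
    obtain ⟨_, rfl⟩ := h
    simp

lemma sum_card_Asub_mul_card_add_le_addEnergy (A B S : Finset ℝ) :
    ∑ s ∈ S, #(Asub A s) * #(Asub A s + B) ≤ E[A, A + B] := by
  simp_rw [← card_product]
  rw [← card_sigma, addEnergy]
  refine card_le_card_of_injOn (fun q => ((q.2.1, q.2.1 - q.1), (q.2.2 - q.1, q.2.2))) ?_ ?_
  · rintro ⟨s, a, u⟩ hq
    simp only [coe_sigma, Set.mem_sigma_iff, coe_product, Set.mem_prod, mem_coe] at hq
    obtain ⟨-, ha, hu⟩ := hq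
    obtain ⟨a', ha', b, hb, rfl⟩ := mem_add.1 hu
    rw [mem_Asub] at ha ha'
    simp only [mem_coe, mem_filter, mem_product]
    refine ⟨⟨ha, ?_, add_mem_add ha'.1 hb⟩, by ring⟩
    rw [show a' + b - s = (a' - s) + b by ring]
    exact add_mem_add ha'.2 hb
  · rintro ⟨s, a, u⟩ _ ⟨s', a', u'⟩ _ h
    simp only [Prod.mk.injEq] at h
    obtain ⟨⟨rfl, h⟩, -, rfl⟩ := h
    obtain rfl : s = s' := by linarith
    rfl

lemma sq_rpow_dXY_mul_card_le (A B : Finset ℝ) (s : ℝ) :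
    ((dXY A A s : ℝ) ^ ((3 : ℝ) / 2) * #B) ^ 2 ≤
      (#(Asub A s) * #(Asub A s + B) : ℕ) * energyXY (Asub A s) B := by
  have hpow : ((dXY A A s : ℝ) ^ ((3 : ℝ) / 2)) ^ 2 = (dXY A A s : ℝ) ^ 3 := by
    rw [← Real.rpow_mul_natCast (Nat.cast_nonneg _)]
    norm_num
  have hCS : ((#(Asub A s) ^ 2 * #B ^ 2 : ℕ) : ℝ) ≤ (#(Asub A s + B) * E[Asub A s, B] : ℕ) :=
    Nat.cast_le.2 (le_card_add_mul_addEnergy _ _)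
  rw [mul_pow, hpow, dXY_self_eq_card_Asub, energyXY_eq_addEnergy]
  push_cast at hCS ⊢
  calc (#(Asub A s) : ℝ) ^ 3 * (#B : ℝ) ^ 2
      = #(Asub A s) * ((#(Asub A s) : ℝ) ^ 2 * (#B : ℝ) ^ 2) := by ring
    _ ≤ #(Asub A s) * ((#(Asub A s + B) : ℝ) * (E[Asub A s, B] : ℝ)) := by gcongr
    _ = _ := by ring

theorem stmt9_general (A B : Finset ℝ) :
    energy15 A ^ 2 * (B.card : ℝ) ^ 2 ≤
      (∑ s ∈ A - A, energyXY (Asub A s) B) * energyXY A (A + B) := by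
  have hsum : ∑ s ∈ A - A, ((#(Asub A s) * #(Asub A s + B) : ℕ) : ℝ) ≤ energyXY A (A + B) := by
    rw [← Nat.cast_sum, energyXY_eq_addEnergy]
    exact Nat.cast_le.2 (sum_card_Asub_mul_card_add_le_addEnergy A B _)
  calc energy15 A ^ 2 * (B.card : ℝ) ^ 2
      = (∑ s ∈ A - A, (dXY A A s : ℝ) ^ ((3 : ℝ) / 2) * #B) ^ 2 := by
        rw [energy15, ← sum_mul, mul_pow]
    _ ≤ (∑ s ∈ A - A, ((#(Asub A s) * #(Asub A s + B) : ℕ) : ℝ)) *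
          ∑ s ∈ A - A, energyXY (Asub A s) B :=
        sum_sq_le_sum_mul_sum_of_sq_le_mul _ (fun _ _ => by positivity)
          (fun _ _ => energyXY_nonneg _ _) (fun s _ => sq_rpow_dXY_mul_card_le A B s)
    _ ≤ energyXY A (A + B) * ∑ s ∈ A - A, energyXY (Asub A s) B :=
        mul_le_mul_of_nonneg_right hsum (sum_nonneg fun _ _ => energyXY_nonneg _ _)
    _ = _ := mul_comm _ _

theorem stmt9 (A B : Finset ℝ) (hA : A.Nonempty) (hB : B.Nonempty) :
    energy15 A ^ 2 * (B.card : ℝ) ^ 2 ≤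
      (∑ s ∈ A - A, energyXY (Asub A s) B) * energyXY A (A + B) :=
  stmt9_general A B
end

section
/- For finite nonempty sets A, B of real numbers, ∑_{s ∈ A−A} |(A ∩ (A+s)) + B| · |A ∩ (A+s)| ≤ E(A, A + B). -/
open Finset Pointwise

/-- `E(X,Y) = ∑_s δ_X(s) δ_Y(s)`. -/
noncomputable def energy (X Y : Finset ℝ) : ℝ :=
  ∑ s ∈ X - X, (dXY X X s : ℝ) * (dXY Y Y s : ℝ)

lemma mem_asub {A : Finset ℝ} {s x : ℝ} : x ∈ Asub A s ↔ x ∈ A ∧ x - s ∈ A := by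
  simp only [Asub, shiftSet, mem_inter, mem_image]
  exact and_congr_right fun _ => ⟨fun ⟨a, ha, h⟩ => by rwa [← h, add_sub_cancel_right],
    fun h => ⟨x - s, h, sub_add_cancel x s⟩⟩

lemma dXY_self_eq_card_asub (X : Finset ℝ) (s : ℝ) : dXY X X s = #(Asub X s) := by
  refine card_nbij' Prod.fst (fun x => (x, x - s)) ?_ ?_ ?_ ?_
  · rintro ⟨x, y⟩ h
    simp only [coe_filter, mem_product, Set.mem_ofPred_eq] at h
    obtain ⟨⟨hx, hy⟩, rfl⟩ := h
    exact mem_asub.2 ⟨hx, by rwa [sub_sub_cancel]⟩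
  · intro x hx
    simp [mem_asub.1 hx]
  · rintro ⟨x, y⟩ h
    simp only [coe_filter, mem_product, Set.mem_ofPred_eq] at h
    simp [← h.2]
  · intro x _
    rfl

lemma asub_add_subset_asub_add (A B : Finset ℝ) (s : ℝ) : Asub A s + B ⊆ Asub (A + B) s := by
  rintro _ hx
  obtain ⟨a, ha, b, hb, rfl⟩ := mem_add.1 hx
  obtain ⟨ha, has⟩ := mem_asub.1 ha
  exact mem_asub.2 ⟨add_mem_add ha hb, by simpa [add_sub_right_comm] using add_mem_add has hb⟩

theorem stmt18_general (A B : Finset ℝ) :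
    ∑ s ∈ A - A, ((((Asub A s) + B).card : ℝ) * ((Asub A s).card : ℝ)) ≤
      energy A (A + B) := by
  unfold energy
  refine sum_le_sum fun s _ => ?_
  rw [dXY_self_eq_card_asub, dXY_self_eq_card_asub, mul_comm]
  gcongr
  exact asub_add_subset_asub_add A B s

theorem stmt18 (A B : Finset ℝ) (hA : A.Nonempty) (hB : B.Nonempty) :
    ∑ s ∈ A - A, ((((Asub A s) + B).card : ℝ) * ((Asub A s).card : ℝ)) ≤
      energy A (A + B) :=
  stmt18_general A B
end
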